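/- In the case β > d̂γ of the MLMC complexity theorem, the total cost S = 2 ε^{-2} (Σ_{ℓ=0}^L √(V_ℓ s_ℓ))² with V_ℓ ≤ c₂ 4^{-βℓ} and s_ℓ ≤ c₃ 4^{d̂γℓ} is bounded by c₄ ε^{-2}, where c₄ = 2 c₂ c₃ (1 − 4^{-(β − d̂γ)/2})^{-2}, uniformly in L. -/
import Mathlib


open Real

/-- MLMC complexity theorem, case `β > dhatγ`: the total cost
`S = 2 ε⁻² (∑_{ℓ=0}^L √(V ℓ s ℓ))²` is bounded by `c₄ ε⁻²` with
`c₄ = 2 c₂ c₃ (1 − 4^{-(β − dhatγ)/2})⁻²`, uniformly in `L`. -/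
theorem mlmc_cost_bound
    (ε c₂ c₃ β γ dhat : ℝ) (hε : 0 < ε) (hc₂ : 0 < c₂) (hc₃ : 0 < c₃)
    (hβ : 0 < β) (hγ : 0 < γ) (hd : 0 < dhat) (hβγ : β > dhat * γ)
    (V s : ℕ → ℝ) (hV0 : ∀ ℓ, 0 ≤ V ℓ) (hs0 : ∀ ℓ, 0 ≤ s ℓ) (L : ℕ)
    (hV : ∀ ℓ ≤ L, V ℓ ≤ c₂ * (4 : ℝ) ^ (-(β * ℓ)))
    (hs : ∀ ℓ ≤ L, s ℓ ≤ c₃ * (4 : ℝ) ^ (dhat * γ * ℓ)) :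
    2 * ε⁻¹ ^ 2 * (∑ ℓ ∈ Finset.range (L + 1), Real.sqrt (V ℓ * s ℓ)) ^ 2 ≤
      (2 * c₂ * c₃ * ((1 - (4 : ℝ) ^ (-(β - dhat * γ) / 2))⁻¹) ^ 2) * ε⁻¹ ^ 2 := by
  set r : ℝ := (4 : ℝ) ^ (-(β - dhat * γ) / 2) with hrdef
  have h40 : (0:ℝ) < 4 := by norm_num
  have hrpos : 0 < r := Real.rpow_pos_of_pos h40 _
  have hrlt : r < 1 := by
    apply Real.rpow_lt_one_of_one_lt_of_neg (by norm_num)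
    linarith
  have key : ∀ ℓ ∈ Finset.range (L + 1),
      Real.sqrt (V ℓ * s ℓ) ≤ Real.sqrt (c₂ * c₃) * r ^ ℓ := by
    intro ℓ hℓ
    have hℓL : ℓ ≤ L := Nat.lt_succ_iff.mp (Finset.mem_range.mp hℓ)
    have h1 : V ℓ * s ℓ ≤ (c₂ * (4:ℝ) ^ (-(β * ℓ))) * (c₃ * (4:ℝ) ^ (dhat * γ * ℓ)) :=
      mul_le_mul (hV ℓ hℓL) (hs ℓ hℓL) (hs0 ℓ) (by positivity)
    have h2 : (c₂ * (4:ℝ) ^ (-(β * ℓ))) * (c₃ * (4:ℝ) ^ (dhat * γ * ℓ))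
        = (c₂ * c₃) * (r ^ ℓ) ^ 2 := by
      have : (r : ℝ) ^ ℓ = (4:ℝ) ^ ((-(β - dhat * γ) / 2) * ℓ) := by
        rw [hrdef, ← Real.rpow_natCast ((4:ℝ) ^ (-(β - dhat * γ) / 2)) ℓ,
          ← Real.rpow_mul (le_of_lt h40)]
      rw [this, ← Real.rpow_natCast _ 2, ← Real.rpow_mul (le_of_lt h40),
        show -(β - dhat * γ) / 2 * (ℓ:ℝ) * ((2:ℕ):ℝ) = -(β * ℓ) + dhat * γ * ℓ by
          push_cast; ring,
        Real.rpow_add h40]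
      ring
    calc Real.sqrt (V ℓ * s ℓ)
        ≤ Real.sqrt ((c₂ * c₃) * (r ^ ℓ) ^ 2) := Real.sqrt_le_sqrt (h2 ▸ h1)
      _ = Real.sqrt (c₂ * c₃) * r ^ ℓ := by
          rw [Real.sqrt_mul (by positivity), Real.sqrt_sq (by positivity)]
  have hsum : (∑ ℓ ∈ Finset.range (L + 1), Real.sqrt (V ℓ * s ℓ))
      ≤ Real.sqrt (c₂ * c₃) * (1 - r)⁻¹ := by
    calc (∑ ℓ ∈ Finset.range (L + 1), Real.sqrt (V ℓ * s ℓ))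
        ≤ ∑ ℓ ∈ Finset.range (L + 1), Real.sqrt (c₂ * c₃) * r ^ ℓ :=
          Finset.sum_le_sum key
      _ = Real.sqrt (c₂ * c₃) * ∑ ℓ ∈ Finset.range (L + 1), r ^ ℓ := by
          rw [Finset.mul_sum]
      _ ≤ Real.sqrt (c₂ * c₃) * (1 - r)⁻¹ := by
          apply mul_le_mul_of_nonneg_left _ (Real.sqrt_nonneg _)
          calc (∑ ℓ ∈ Finset.range (L + 1), r ^ ℓ)
              ≤ ∑' ℓ : ℕ, r ^ ℓ := Summable.sum_le_tsum _ (fun i _ => by positivity)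
                (summable_geometric_of_lt_one (le_of_lt hrpos) hrlt)
            _ = (1 - r)⁻¹ := tsum_geometric_of_lt_one (le_of_lt hrpos) hrlt
  have hsumnn : 0 ≤ ∑ ℓ ∈ Finset.range (L + 1), Real.sqrt (V ℓ * s ℓ) :=
    Finset.sum_nonneg fun ℓ _ => Real.sqrt_nonneg _
  have hsq : (∑ ℓ ∈ Finset.range (L + 1), Real.sqrt (V ℓ * s ℓ)) ^ 2
      ≤ (Real.sqrt (c₂ * c₃) * (1 - r)⁻¹) ^ 2 :=
    pow_le_pow_left₀ hsumnn hsum 2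
  have hrw : (Real.sqrt (c₂ * c₃) * (1 - r)⁻¹) ^ 2 = c₂ * c₃ * ((1 - r)⁻¹) ^ 2 := by
    rw [mul_pow, Real.sq_sqrt (by positivity)]
  have hεnn : (0:ℝ) ≤ ε⁻¹ ^ 2 := by positivity
  calc 2 * ε⁻¹ ^ 2 * (∑ ℓ ∈ Finset.range (L + 1), Real.sqrt (V ℓ * s ℓ)) ^ 2
      ≤ 2 * ε⁻¹ ^ 2 * (c₂ * c₃ * ((1 - r)⁻¹) ^ 2) := by
        rw [← hrw]; exact mul_le_mul_of_nonneg_left hsq (by positivity)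
    _ = (2 * c₂ * c₃ * ((1 - r)⁻¹) ^ 2) * ε⁻¹ ^ 2 := by ring
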